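/- Let a, b, c be positive integers with a + b + c = n and gcd(a + b, b + c) = 1. Then the meander graph M(a, b, c | n) has exactly two vertices of degree 1, and every other vertex has degree 2. -/

import Mathlib

/-!
Every vertex of `M(a, b, c | n)` has two partners: its mirror image in its block of `(a, b, c)`
(top) and its mirror image in `[1, n]` (bottom); it is incident with an edge to each partner that
differs from it. When `b > 0` and `a ≠ c` the two partners never coincide, so every degree is `1`
or `2`, and the vertices of degree `1` are exactly the centres of the odd blocks among `a, b, c, n`.
Their number `a % 2 + b % 2 + c % 2 + n % 2` is `2`, because `a + b` and `b + c` are not both even.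
-/

/-- Two (1-based) positions `u v` are joined by an arc determined by the
composition `L`: they lie in a common block of `L` and are reflections of each
other across the middle of that block. -/
def blockAdj (L : List ℕ) (u v : ℕ) : Prop :=
  ∃ k < L.length,
    (L.take k).sum < u ∧ u ≤ (L.take (k + 1)).sum ∧
    (L.take k).sum < v ∧ v ≤ (L.take (k + 1)).sum ∧
    u + v = (L.take k).sum + (L.take (k + 1)).sum + 1 ∧ u ≠ v

/-- The meander graph `M(x | y)` on vertices `{1, …, n}` (represented by
`Fin n`, vertex `i` corresponding to the number `i + 1`): top edges come from
the blocks of `x`, bottom edges from the blocks of `y`. -/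
def meander (x y : List ℕ) (n : ℕ) : SimpleGraph (Fin n) where
  Adj i j := blockAdj x ((i : ℕ) + 1) ((j : ℕ) + 1) ∨ blockAdj y ((i : ℕ) + 1) ((j : ℕ) + 1)
  symm := ⟨by
    rintro i j (⟨k, hk, h1, h2, h3, h4, h5, h6⟩ | ⟨k, hk, h1, h2, h3, h4, h5, h6⟩)
    · exact Or.inl ⟨k, hk, h3, h4, h1, h2, by omega, by omega⟩
    · exact Or.inr ⟨k, hk, h3, h4, h1, h2, by omega, by omega⟩⟩
  loopless := ⟨by
    rintro i (⟨k, hk, h1, h2, h3, h4, h5, h6⟩ | ⟨k, hk, h1, h2, h3, h4, h5, h6⟩) <;> omega⟩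

/-- A graph on `Fin n` consists of a single path when it is isomorphic to the
path graph on `n` vertices. -/
def IsSinglePath {n : ℕ} (G : SimpleGraph (Fin n)) : Prop :=
  Nonempty (G ≃g SimpleGraph.pathGraph n)

open Finset

lemma Set.ncard_pair_sdiff_singleton {α : Type*} [DecidableEq α] {p q v : α} (hpq : p ≠ q) :
    (({p, q} : Set α) \ {v}).ncard = if v = p ∨ v = q then 1 else 2 := by
  split_ifs with h
  · obtain rfl | rfl := h
    · rw [Set.pair_sdiff_left hpq, Set.ncard_singleton]
    · rw [Set.pair_sdiff_right hpq, Set.ncard_singleton]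
  · rw [Set.sdiff_singleton_eq_self (by simpa [eq_comm] using h), Set.ncard_pair hpq]

lemma Fin.card_filter_two_mul_add_one_eq {N m : ℕ} (hm : m ≤ 2 * N) :
    #{i : Fin N | 2 * (i : ℕ) + 1 = m} = m % 2 := by
  rcases Nat.even_or_odd' m with ⟨k, rfl | rfl⟩
  · simp only [Nat.mul_mod_right, card_eq_zero, filter_eq_empty_iff]
    omega
  · rw [show (2 * k + 1) % 2 = 1 by omega, card_eq_one]
    exact ⟨⟨k, by omega⟩, by ext i; simp [Fin.ext_iff]⟩

lemma Fin.ncard_setOf_two_mul_add_one_mem {N : ℕ} (T : Finset ℕ) (hT : ∀ t ∈ T, t ≤ 2 * N) :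
    {i : Fin N | 2 * (i : ℕ) + 1 ∈ T}.ncard = ∑ t ∈ T, t % 2 := by
  rw [← coe_filter_univ, Set.ncard_coe_finset,
    card_eq_sum_card_fiberwise (f := fun i : Fin N ↦ 2 * (i : ℕ) + 1) (t := T) (by simp [Set.MapsTo])]
  refine sum_congr rfl fun t ht ↦ ?_
  rw [filter_filter, ← Fin.card_filter_two_mul_add_one_eq (hT t ht)]
  congr 1
  ext i
  simp only [mem_filter, mem_univ, true_and, and_iff_right_iff_imp]
  rintro rfl
  exact ht

lemma Fin.rev_eq_self_iff {n : ℕ} (i : Fin n) : i.rev = i ↔ 2 * (i : ℕ) + 1 = n := by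
  rw [Fin.ext_iff, Fin.val_rev]
  omega

lemma blockAdj_singleton_iff (m u w : ℕ) :
    blockAdj [m] u w ↔ 0 < u ∧ u ≤ m ∧ 0 < w ∧ w ≤ m ∧ u + w = m + 1 ∧ u ≠ w := by
  simp only [blockAdj, List.length_singleton, Nat.lt_one_iff, exists_eq_left, List.take_zero,
    List.take_succ_cons, List.sum_cons, List.sum_nil]
  omega

lemma blockAdj_triple_iff (a b c u w : ℕ) : blockAdj [a, b, c] u w ↔
    (0 < u ∧ u ≤ a ∧ 0 < w ∧ w ≤ a ∧ u + w = a + 1 ∧ u ≠ w) ∨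
    (a < u ∧ u ≤ a + b ∧ a < w ∧ w ≤ a + b ∧ u + w = 2 * a + b + 1 ∧ u ≠ w) ∨
    (a + b < u ∧ u ≤ a + b + c ∧ a + b < w ∧ w ≤ a + b + c ∧
      u + w = 2 * a + 2 * b + c + 1 ∧ u ≠ w) := by
  simp only [blockAdj, List.length_cons, List.length_nil, Nat.exists_lt_succ_left,
    Nat.not_lt_zero, false_and, exists_false, or_false, List.take_zero, List.take_succ_cons,
    List.take_nil, List.sum_cons, List.sum_nil]
  omega

lemma blockAdj_singleton_iff_eq_rev {n : ℕ} (i j : Fin n) :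
    blockAdj [n] (i + 1) (j + 1) ↔ j = i.rev ∧ j ≠ i := by
  simp only [blockAdj_singleton_iff, Fin.ext_iff, ne_eq, Fin.val_rev]
  omega

/-- The top involution of `M(a, b, c | a + b + c)` in the `0`-based indexing of `Fin`: it reverses
each of the blocks `[0, a)`, `[a, a + b)`, `[a + b, a + b + c)`. -/
def blockMirror (a b c : ℕ) (i : Fin (a + b + c)) : Fin (a + b + c) :=
  if h : (i : ℕ) < a then ⟨a - 1 - i, by omega⟩
  else if h' : (i : ℕ) < a + b then ⟨2 * a + b - 1 - i, by omega⟩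
  else ⟨2 * a + 2 * b + c - 1 - i, by omega⟩

section blockMirror

variable {a b c : ℕ}

lemma val_blockMirror (i : Fin (a + b + c)) :
    (blockMirror a b c i : ℕ) =
      if (i : ℕ) < a then a - 1 - i
      else if (i : ℕ) < a + b then 2 * a + b - 1 - i
      else 2 * a + 2 * b + c - 1 - i := by
  unfold blockMirror
  split_ifs <;> rfl

lemma blockAdj_triple_iff_eq_blockMirror (i j : Fin (a + b + c)) :
    blockAdj [a, b, c] (i + 1) (j + 1) ↔ j = blockMirror a b c i ∧ j ≠ i := by
  simp only [blockAdj_triple_iff, Fin.ext_iff, ne_eq, val_blockMirror]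
  split_ifs <;> omega

lemma blockMirror_eq_self_iff (i : Fin (a + b + c)) :
    blockMirror a b c i = i ↔
      2 * (i : ℕ) + 1 = a ∨ 2 * (i : ℕ) + 1 = 2 * a + b ∨ 2 * (i : ℕ) + 1 = 2 * a + 2 * b + c := by
  rw [Fin.ext_iff, val_blockMirror]
  split_ifs <;> omega

/-- The two involutions agree only on a block of `(a, b, c)` that `Fin.rev` maps to itself; for
`b > 0` that can only be the middle block, and only when `a = c`. -/
lemma blockMirror_ne_rev (hb : 0 < b) (hac : a ≠ c) (i : Fin (a + b + c)) :
    blockMirror a b c i ≠ i.rev := by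
  rw [Ne, Fin.ext_iff, Fin.val_rev, val_blockMirror]
  split_ifs <;> omega

end blockMirror

lemma neighborSet_meander_triple (a b c : ℕ) (i : Fin (a + b + c)) :
    (meander [a, b, c] [a + b + c] (a + b + c)).neighborSet i =
      {blockMirror a b c i, i.rev} \ {i} := by
  ext j
  simp only [SimpleGraph.mem_neighborSet, meander, blockAdj_triple_iff_eq_blockMirror,
    blockAdj_singleton_iff_eq_rev, Set.mem_sdiff, Set.mem_insert_iff, Set.mem_singleton_iff]
  tauto

lemma ncard_neighborSet_meander_triple {a b c : ℕ} (hb : 0 < b) (hac : a ≠ c)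
    (i : Fin (a + b + c)) :
    ((meander [a, b, c] [a + b + c] (a + b + c)).neighborSet i).ncard =
      if 2 * (i : ℕ) + 1 ∈ ({a, 2 * a + b, 2 * a + 2 * b + c, a + b + c} : Finset ℕ)
      then 1 else 2 := by
  rw [neighborSet_meander_triple, Set.ncard_pair_sdiff_singleton (blockMirror_ne_rev hb hac i)]
  simp only [eq_comm (a := i), blockMirror_eq_self_iff, Fin.rev_eq_self_iff, mem_insert,
    mem_singleton, or_assoc]

theorem meander_submaximal_parabolic_two_degree_one_vertices_general
    (a b c n : ℕ) (ha : 0 < a) (hb : 0 < b) (habc : a + b + c = n)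
    (hg : Nat.gcd (a + b) (b + c) = 1) :
    { v : Fin n | ((meander [a, b, c] [n] n).neighborSet v).ncard = 1 }.ncard = 2 ∧
    ∀ v : Fin n, ((meander [a, b, c] [n] n).neighborSet v).ncard ≠ 1 →
      ((meander [a, b, c] [n] n).neighborSet v).ncard = 2 := by
  subst habc
  have hac : a ≠ c := by
    rintro rfl
    rw [add_comm b a, Nat.gcd_self] at hg
    omega
  have hpar : ¬ (2 ∣ a + b ∧ 2 ∣ b + c) := fun ⟨h₁, h₂⟩ ↦ by
    simpa [hg] using Nat.dvd_gcd h₁ h₂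
  simp only [ncard_neighborSet_meander_triple hb hac]
  refine ⟨?_, fun v hv ↦ by simpa [ite_eq_left_iff] using hv⟩
  simp only [ite_eq_left_iff, OfNat.ofNat_ne_one, imp_false, not_not]
  rw [Fin.ncard_setOf_two_mul_add_one_mem _ (by simp only [mem_insert, mem_singleton]; omega),
    sum_insert (by simp only [mem_insert, mem_singleton]; omega),
    sum_insert (by simp only [mem_insert, mem_singleton]; omega), sum_pair (by omega)]
  omega

/-- If `a + b + c = n` with `gcd(a + b, b + c) = 1`, then
the meander graph `M(a, b, c | n)` has exactly two vertices of degree `1` and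
every other vertex has degree `2`. -/
theorem meander_submaximal_parabolic_two_degree_one_vertices
    (a b c n : ℕ) (ha : 0 < a) (hb : 0 < b) (hc : 0 < c) (habc : a + b + c = n)
    (hg : Nat.gcd (a + b) (b + c) = 1) :
    { v : Fin n | ((meander [a, b, c] [n] n).neighborSet v).ncard = 1 }.ncard = 2 ∧
    ∀ v : Fin n, ((meander [a, b, c] [n] n).neighborSet v).ncard ≠ 1 →
      ((meander [a, b, c] [n] n).neighborSet v).ncard = 2 :=
  meander_submaximal_parabolic_two_degree_one_vertices_general a b c n ha hb habc hg
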